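/- arXiv:math/9310224 — 7 statements merged into one kernel-verified Lean document; each statement's English description precedes it below -/
import Mathlib

section
/- There exists a sequence ⟨σ_i : i ∈ ω⟩ of functions from ω to ω such that for every N < ω and every family of functions φ_i : N → ω (for i < N) there exist distinct natural numbers n_0, …, n_{N-1} such that for all i, j_0, j_1 < N, if φ_i(j_0) = j_1 then σ_i(n_{j_0}) = n_{j_1}. -/
/-- Type of tasks: a size `N` together with a family `φ : Fin N → Fin N → ℕ`. -/
def AbsorbTask : Type := Σ N : ℕ, Fin N → Fin N → ℕ

instance : Encodable AbsorbTask := by unfold AbsorbTask; infer_instance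

/-- The universal sequence of functions. -/
noncomputable def sig (i m : ℕ) : ℕ :=
  match Encodable.decode (α := AbsorbTask) m.unpair.1 with
  | some ⟨N, φ⟩ =>
      if h : i < N ∧ m.unpair.2 < N then
        Nat.pair m.unpair.1 (φ ⟨i, h.1⟩ ⟨m.unpair.2, h.2⟩)
      else 0
  | none => 0

/-- There exists a sequence ⟨σ_i : i ∈ ω⟩ of functions ω → ω such that
for every N and every family φ_i : N → ω (i < N) there are distinct n_0,…,n_{N-1}
with φ_i(j₀) = j₁ implying σ_i(n_{j₀}) = n_{j₁}. -/
theorem stmt0 :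
    ∃ σ : ℕ → ℕ → ℕ, ∀ N : ℕ, ∀ φ : Fin N → Fin N → ℕ,
      ∃ n : Fin N → ℕ, Function.Injective n ∧
        ∀ i j₀ j₁ : Fin N, φ i j₀ = (j₁ : ℕ) → σ i (n j₀) = n j₁ := by
  refine ⟨sig, fun N φ => ?_⟩
  set t := Encodable.encode (⟨N, φ⟩ : AbsorbTask) with ht
  refine ⟨fun j => Nat.pair t j, ?_, ?_⟩
  · intro a b hab
    simp only at hab
    have := congrArg (fun m => m.unpair.2) hab
    simpa [Fin.ext_iff] using this
  · intro i j₀ j₁ hφ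
    have hdec : Encodable.decode (α := AbsorbTask) t = some ⟨N, φ⟩ := Encodable.encodek _
    simp only [sig, Nat.unpair_pair, hdec]
    rw [dif_pos ⟨i.isLt, j₀.isLt⟩]
    simp [Fin.eta, hφ]
end

section
/- Suppose ⟨σ_i : i ∈ ω⟩ is a sequence of functions ω → ω, and for each i define f_i : ω^ω → ω^ω by f_i(x)(k) = x(k) if k < i and f_i(x)(k) = σ_i(x(k)) otherwise, and set F(x) = {f_i(x) : i ∈ ω}. If ⟨x_α, y_α : α < ω₁⟩ are elements of ω^ω with no repetition among {x_α, y_α : α < ω₁}, then there exists an uncountable set A ⊆ ω₁ such that for all α, β ∈ A with α < β, x_α ∉ F(y_β). -/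
noncomputable def omega1 : Ordinal := (Cardinal.aleph 1).ord

/-- f_i(x)(k) = x(k) if k < i, σ_i(x(k)) otherwise. -/
def fseq (σ : ℕ → ℕ → ℕ) (i : ℕ) (x : ℕ → ℕ) : ℕ → ℕ :=
  fun k => if k < i then x k else σ i (x k)

/-- F(x) = {f_i(x) : i ∈ ω}. -/
def Fset (σ : ℕ → ℕ → ℕ) (x : ℕ → ℕ) : Set (ℕ → ℕ) :=
  {z | ∃ i : ℕ, z = fseq σ i x}

/-- Auxiliary coloring defined by well-founded recursion:
`col β = 1 + max of colors of g i β` over `i ≤ M` with `g i β < β`. -/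
noncomputable def col (M : ℕ) (g : ℕ → Ordinal → Ordinal) : Ordinal → ℕ :=
  WellFounded.fix Ordinal.lt_wf
    (fun β rec => ((Finset.range (M+1)).sup
      (fun i => if h : g i β < β then rec (g i β) h else 0)) + 1)

theorem col_eq (M : ℕ) (g : ℕ → Ordinal → Ordinal) (β : Ordinal) :
    col M g β = ((Finset.range (M+1)).sup
      (fun i => if _ : g i β < β then col M g (g i β) else 0)) + 1 := by
  rw [col, WellFounded.fix_eq]

theorem col_lt (M : ℕ) (g : ℕ → Ordinal → Ordinal) {i : ℕ} {β : Ordinal}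
    (hi : i ≤ M) (h : g i β < β) : col M g (g i β) < col M g β := by
  conv_rhs => rw [col_eq]
  have hmem : i ∈ Finset.range (M+1) := Finset.mem_range.mpr (Nat.lt_succ_of_le hi)
  have := Finset.le_sup (f := fun i => if _ : g i β < β then col M g (g i β) else 0) hmem
  simp only [dif_pos h] at this
  omega

/-- Pigeonhole: an uncountable set mapped into a countable type has an uncountable fiber. -/
theorem pigeon {T : Type} [Countable T] (B : Set Ordinal) (hB : ¬ B.Countable)
    (f : Ordinal → T) : ∃ t : T, ¬ {β ∈ B | f β = t}.Countable := by
  by_contra hc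
  push_neg at hc
  apply hB
  have hsub : B ⊆ ⋃ t : T, {β ∈ B | f β = t} :=
    fun β hβ => Set.mem_iUnion.mpr ⟨f β, hβ, rfl⟩
  exact (Set.countable_iUnion hc).mono hsub

/-- One-sided free set lemma: given finitely many "predecessor functions" `g i`,
any uncountable set has an uncountable subset `A` such that for `α < β` in `A`,
`α` is not of the form `g i β` for `i ≤ M`. -/
theorem free_aux (M : ℕ) (g : ℕ → Ordinal → Ordinal) (B : Set Ordinal)
    (hB : ¬ B.Countable) :
    ∃ A : Set Ordinal, A ⊆ B ∧ ¬ A.Countable ∧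
      ∀ α ∈ A, ∀ β ∈ A, α < β → ∀ i ≤ M, g i β ≠ α := by
  obtain ⟨n, hn⟩ := pigeon B hB (col M g)
  refine ⟨{β ∈ B | col M g β = n}, fun β hβ => hβ.1, hn, ?_⟩
  rintro α ⟨-, hα⟩ β ⟨-, hβ⟩ hlt i hi hg
  have : col M g (g i β) < col M g β := col_lt M g hi (hg ▸ hlt)
  rw [hg, hα, hβ] at this
  exact lt_irrefl n this

theorem Iio_omega1_uncountable : ¬ (Set.Iio omega1).Countable := by
  intro h
  have := h.le_aleph0
  rw [Ordinal.mk_Iio_ordinal] at this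
  simp [omega1, Cardinal.card_ord] at this

/-- If ⟨x_α, y_α : α < ω₁⟩ have no repetition among
{x_α, y_α : α < ω₁}, then there is an uncountable A ⊆ ω₁ such that for all
α < β in A, x_α ∉ F(y_β). -/
theorem stmt1 (σ : ℕ → ℕ → ℕ) (x y : Ordinal → (ℕ → ℕ))
    (hnorep : ∀ α ∈ Set.Iio omega1, ∀ β ∈ Set.Iio omega1,
      (x α = x β → α = β) ∧ (y α = y β → α = β) ∧ x α ≠ y β) :
    ∃ A : Set Ordinal, A ⊆ Set.Iio omega1 ∧ ¬ A.Countable ∧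
      ∀ α ∈ A, ∀ β ∈ A, α < β → x α ∉ Fset σ (y β) := by
  classical
  -- least point of difference of x α and y α
  set md : Ordinal → ℕ := fun α => if h : ∃ k, x α k ≠ y α k then Nat.find h else 0 with hmd
  -- pigeonhole on (md α, x α (md α), y α (md α))
  obtain ⟨⟨m, a, b⟩, hA0⟩ := pigeon (Set.Iio omega1) Iio_omega1_uncountable
    (fun α => ((md α, x α (md α), y α (md α)) : ℕ × ℕ × ℕ))
  set A0 : Set Ordinal :=
    {β ∈ Set.Iio omega1 | (md β, x β (md β), y β (md β)) = (m, a, b)} with hA0def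
  have hA0sub : A0 ⊆ Set.Iio omega1 := fun β hβ => hβ.1
  -- facts on A0
  have hmem : ∀ α ∈ A0, md α = m ∧ x α m = a ∧ y α m = b := by
    rintro α ⟨-, hα⟩
    have h1 : md α = m := congrArg Prod.fst hα
    have h2 : x α (md α) = a := congrArg (fun p => p.2.1) hα
    have h3 : y α (md α) = b := congrArg (fun p => p.2.2) hα
    rw [h1] at h2 h3
    exact ⟨h1, h2, h3⟩
  have hxyne : ∀ α ∈ A0, ∃ h : ∃ k, x α k ≠ y α k, md α = Nat.find h := by
    intro α hα
    have hne : x α ≠ y α := (hnorep α (hA0sub hα) α (hA0sub hα)).2.2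
    have h : ∃ k, x α k ≠ y α k := Function.ne_iff.mp hne
    exact ⟨h, by rw [hmd]; simp [h]⟩
  have hab : a ≠ b := by
    obtain ⟨α, hα⟩ : A0.Nonempty := by
      by_contra hc
      exact hA0 (by rw [Set.not_nonempty_iff_eq_empty] at hc; rw [hA0def] at *; rw [hc]; exact Set.countable_empty)
    obtain ⟨hm, hxa, hyb⟩ := hmem α hα
    obtain ⟨h, hfind⟩ := hxyne α hα
    have := Nat.find_spec h
    rw [← hfind, hm] at this
    rw [← hxa, ← hyb]; exact this
  -- the predecessor functions
  set g : ℕ → Ordinal → Ordinal := fun i β =>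
    if h : ∃ α ∈ Set.Iio omega1, x α = fseq σ i (y β) then h.choose else omega1 with hg
  -- key: bad pairs are captured by g
  have hkey : ∀ α ∈ A0, ∀ β ∈ A0, x α ∈ Fset σ (y β) → ∃ i ≤ m, g i β = α := by
    intro α hα β hβ hF
    obtain ⟨i, hi⟩ := hF
    -- i ≤ m
    have him : i ≤ m := by
      by_contra hc
      push_neg at hc
      have : x α m = y β m := by
        rw [hi]; simp [fseq, hc]
      obtain ⟨-, hxa, -⟩ := hmem α hα
      obtain ⟨-, -, hyb⟩ := hmem β hβ
      rw [hxa, hyb] at this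
      exact hab this
    refine ⟨i, him, ?_⟩
    have hex : ∃ γ ∈ Set.Iio omega1, x γ = fseq σ i (y β) := ⟨α, hA0sub hα, hi⟩
    rw [hg]
    simp only [dif_pos hex]
    have hspec := hex.choose_spec
    exact (hnorep _ hspec.1 α (hA0sub hα)).1 (hspec.2.trans hi.symm)
  -- apply the free set lemma
  obtain ⟨A, hAsub, hAunc, hAfree⟩ := free_aux m g A0 hA0
  refine ⟨A, fun β hβ => hA0sub (hAsub hβ), hAunc, ?_⟩
  intro α hα β hβ hlt hF
  obtain ⟨i, him, hgi⟩ := hkey α (hAsub hα) β (hAsub hβ) hF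
  exact hAfree α hα β hβ hlt i him hgi
end

section
/- With F as defined from the sequence ⟨σ_i⟩ (F(x) = {f_i(x) : i ∈ ω} where f_i(x)(k) = x(k) for k < i and σ_i(x(k)) otherwise): if {W_α : α < ω₁} is a family of pairwise disjoint finite subsets of ω^ω, then there exist β < ω₁ and an infinite set A ⊆ β such that for all α ∈ A, all x ∈ W_α, and all y ∈ W_β, x ∉ F(y). -/
open Filter Function Set Ordinal

theorem Pairwise.eventually_disjoint_of_finite {ι α : Type*} {V : ι → Set α}
    (hV : Pairwise (Disjoint on V)) {T : Set α} (hT : T.Finite) :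
    ∀ᶠ n in cofinite, Disjoint (V n) T := by
  simp only [Set.disjoint_right]
  refine (eventually_all_finite hT).2 fun t _ => eventually_cofinite.2 ?_
  refine Set.Subsingleton.finite fun a ha b hb => ?_
  by_contra hab
  exact Set.disjoint_left.1 (hV hab) (not_not.1 ha) (not_not.1 hb)

theorem fseq_apply_of_lt (σ : ℕ → ℕ → ℕ) {i k : ℕ} (x : ℕ → ℕ) (hk : k < i) :
    fseq σ i x k = x k := if_pos hk

theorem eq_of_frequently_exists_mem_Fset_inter {ι : Type*} {σ : ℕ → ℕ → ℕ} {V : ι → Set (ℕ → ℕ)}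
    (hV : Pairwise (Disjoint on V)) {y y' : ℕ → ℕ}
    (h : ∃ᶠ n in cofinite, ∃ x ∈ V n, x ∈ Fset σ y ∧ x ∈ Fset σ y') : y = y' := by
  funext k
  have hT : ((fun i => fseq σ i y) '' Iic k ∪ (fun i => fseq σ i y') '' Iic k).Finite :=
    ((finite_Iic k).image _).union ((finite_Iic k).image _)
  obtain ⟨n, ⟨x, hxV, ⟨i, rfl⟩, ⟨i', hi'⟩⟩, hVT⟩ :=
    (h.and_eventually (hV.eventually_disjoint_of_finite hT)).exists
  have hki : k < i := by
    by_contra! hik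
    exact Set.disjoint_left.1 hVT hxV (Or.inl ⟨i, hik, rfl⟩)
  have hki' : k < i' := by
    by_contra! hik
    exact Set.disjoint_left.1 hVT hxV (Or.inr ⟨i', hik, hi'.symm⟩)
  rw [← fseq_apply_of_lt σ y hki, ← fseq_apply_of_lt σ y' hki', hi']

theorem exists_ne_common_rel_of_encard_le {α β : Type*} {R : α → β → Prop} {m : ℕ} {V : Set α}
    (hV : V.encard ≤ m) {Y : Fin (m + 1) → Set β} (hY : Pairwise (Disjoint on Y))
    (h : ∀ j, ∃ x ∈ V, ∃ y ∈ Y j, R x y) :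
    ∃ y ∈ ⋃ j, Y j, ∃ y' ∈ ⋃ j, Y j, y ≠ y' ∧ ∃ x ∈ V, R x y ∧ R x y' := by
  choose x hxV y hyY hR using h
  have hlt : V.encard < (univ : Set (Fin (m + 1))).encard := by
    rw [encard_univ, ENat.card_eq_coe_fintype_card, Fintype.card_fin]
    exact hV.trans_lt (by norm_cast; omega)
  obtain ⟨a, -, b, -, hab, hxab⟩ :=
    exists_ne_map_eq_of_encard_lt_of_maps_to hlt fun j _ => hxV j
  exact ⟨y a, mem_iUnion.2 ⟨a, hyY a⟩, y b, mem_iUnion.2 ⟨b, hyY b⟩,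
    (hY hab).ne_of_mem (hyY a) (hyY b), x a, hxV a, hR a, hxab ▸ hR b⟩

theorem exists_frequently_forall_notMem_Fset {ι : Type*} [Infinite ι] (σ : ℕ → ℕ → ℕ) {m : ℕ}
    {V : ι → Set (ℕ → ℕ)} (hV : Pairwise (Disjoint on V)) (hVcard : ∀ n, (V n).encard ≤ m)
    {Y : Fin (m + 1) → Set (ℕ → ℕ)} (hY : Pairwise (Disjoint on Y)) (hYfin : ∀ j, (Y j).Finite) :
    ∃ j, ∃ᶠ n in cofinite, ∀ x ∈ V n, ∀ y ∈ Y j, x ∉ Fset σ y := by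
  by_contra! h
  have hU : (⋃ j, Y j).Finite := finite_iUnion hYfin
  have hpair : ∃ᶠ n in cofinite, ∃ y ∈ ⋃ j, Y j, ∃ y' ∈ ⋃ j, Y j,
      y ≠ y' ∧ ∃ x ∈ V n, x ∈ Fset σ y ∧ x ∈ Fset σ y' :=
    ((eventually_all.2 h).mono fun n hn =>
      exists_ne_common_rel_of_encard_le (hVcard n) hY hn).frequently
  simp only [hU.frequently_exists, frequently_and_distrib_left] at hpair
  obtain ⟨y, -, y', -, hne, hfreq⟩ := hpair
  exact hne (eq_of_frequently_exists_mem_Fset_inter hV hfreq)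

theorem not_countable_Iio_omega1 : ¬ (Iio omega1.{u}).Countable := by
  rw [← Cardinal.le_aleph0_iff_set_countable, Cardinal.mk_Iio_ordinal, omega1, Cardinal.card_ord]
  simp

theorem exists_infinite_fiber_of_not_countable {α : Type*} {s : Set α} (hs : ¬ s.Countable)
    (f : α → ℕ) : ∃ m, {a ∈ s | f a = m}.Infinite := by
  by_contra! h
  refine hs ((countable_iUnion fun m => (h m).countable).mono fun a ha => ?_)
  exact mem_iUnion_of_mem (f a) (show a ∈ {b ∈ s | f b = f a} from ⟨ha, rfl⟩)

theorem exists_lt_omega1_forall_lt {o : ℕ → Ordinal.{u}} (ho : ∀ n, o n < omega1) :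
    ∃ δ < omega1, ∀ n, o n < δ := by
  rw [omega1, Cardinal.ord_aleph] at *
  refine ⟨⨆ n, Order.succ (o n), iSup_lt_omega_one fun n => ?_, fun n => ?_⟩
  · exact (Cardinal.isSuccLimit_omega 1).succ_lt (ho n)
  · exact (Order.lt_succ (o n)).trans_le (Ordinal.le_iSup (fun n => Order.succ (o n)) n)

theorem add_natCast_lt_omega1 {δ : Ordinal.{u}} (hδ : δ < omega1) (j : ℕ) : δ + j < omega1 := by
  rw [omega1, Cardinal.ord_aleph] at *
  exact isPrincipal_add_omega 1 hδ ((natCast_lt_omega0 j).trans omega0_lt_omega_one)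

/-- If {W_α : α < ω₁} is a family of pairwise disjoint finite
subsets of ω^ω, then there are β < ω₁ and an infinite A ⊆ β such that for all
α ∈ A, x ∈ W_α and y ∈ W_β, x ∉ F(y). -/
theorem stmt2 (σ : ℕ → ℕ → ℕ) (W : Ordinal → Set (ℕ → ℕ))
    (hfin : ∀ α ∈ Set.Iio omega1, (W α).Finite)
    (hdisj : ∀ α ∈ Set.Iio omega1, ∀ β ∈ Set.Iio omega1, α ≠ β →
      Disjoint (W α) (W β)) :
    ∃ β ∈ Set.Iio omega1, ∃ A : Set Ordinal, A ⊆ Set.Iio β ∧ A.Infinite ∧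
      ∀ α ∈ A, ∀ x ∈ W α, ∀ y ∈ W β, x ∉ Fset σ y := by
  obtain ⟨m, hm⟩ :=
    exists_infinite_fiber_of_not_countable not_countable_Iio_omega1 fun α => (W α).ncard
  let o : ℕ → Ordinal := fun n => hm.natEmbedding _ n
  have ho_mem : ∀ n, o n < omega1 ∧ (W (o n)).ncard = m := fun n => (hm.natEmbedding _ n).2
  have ho : Injective o := Subtype.val_injective.comp (hm.natEmbedding _).injective
  obtain ⟨δ, hδ, hoδ⟩ := exists_lt_omega1_forall_lt fun n => (ho_mem n).1
  let B : Fin (m + 1) → Ordinal := fun j => δ + (j : ℕ)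
  have hB : ∀ j, B j < omega1 := fun j => add_natCast_lt_omega1 hδ j
  have hBinj : Injective B := fun j l h => Fin.val_injective (by simpa [B] using h)
  obtain ⟨j, hj⟩ := exists_frequently_forall_notMem_Fset σ (V := W ∘ o) (Y := W ∘ B)
    (fun a b hab => hdisj _ (ho_mem a).1 _ (ho_mem b).1 (ho.ne hab))
    (fun n => by rw [comp_apply, ← (hfin _ (ho_mem n).1).cast_ncard_eq, (ho_mem n).2])
    (fun j l hjl => hdisj _ (hB j) _ (hB l) (hBinj.ne hjl)) (fun j => hfin _ (hB j))
  refine ⟨B j, hB j, o '' {n | ∀ x ∈ W (o n), ∀ y ∈ W (B j), x ∉ Fset σ y}, ?_, ?_, ?_⟩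
  · rintro _ ⟨n, -, rfl⟩
    exact (hoδ n).trans_le le_self_add
  · exact (frequently_cofinite_iff_infinite.1 hj).image ho.injOn
  · rintro _ ⟨n, hn, rfl⟩
    exact hn
end

section
/- The forcing notion Q, whose conditions are finite functions q with domain a finite subset of ω₁ and range contained in ω^n(q) for some n(q) ∈ ω, with q injective, ordered by: q ≤ p iff dom(q) ⊆ dom(p), q(α) ⊆ p(α) for all α ∈ dom(q), and whenever α < β in dom(q), i < n(q), and q(α) R_i q(β) then p(α) R_i p(β), satisfies the countable chain condition (in fact the Knaster property). -/
/-- s R_i t iff i < |s| = |t|, s↾i = t↾i, and s(l) = σ_i(t(l)) for l ∈ [i,|s|). -/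
def Rrel (σ : ℕ → ℕ → ℕ) (i : ℕ) (s t : List ℕ) : Prop :=
  i < s.length ∧ s.length = t.length ∧ s.take i = t.take i ∧
    ∀ l, i ≤ l → l < s.length → s.getD l 0 = σ i (t.getD l 0)

/-- A condition of the forcing Q: a finite injective function from ω₁ into
ω^{<ω} all of whose values have the same length `n`. -/
structure QCond (σ : ℕ → ℕ → ℕ) where
  dom : Finset Ordinal
  sub : ∀ α ∈ dom, α < omega1
  n : ℕ
  val : Ordinal → List ℕ
  len : ∀ α ∈ dom, (val α).length = n
  inj : ∀ α ∈ dom, ∀ β ∈ dom, val α = val β → α = β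

/-- The order of Q: q ≤ p iff dom(q) ⊆ dom(p), q(α) ⊆ p(α), and the
R_i-patterns of q are preserved by p. -/
def QLe (σ : ℕ → ℕ → ℕ) (q p : QCond σ) : Prop :=
  q.dom ⊆ p.dom ∧ (∀ α ∈ q.dom, q.val α <+: p.val α) ∧
    ∀ α ∈ q.dom, ∀ β ∈ q.dom, α < β → ∀ i < q.n,
      Rrel σ i (q.val α) (q.val β) → Rrel σ i (p.val α) (p.val β)

/-!
Given uncountably many conditions, pass to an uncountable subfamily with a common profile
(`n` and the list of values along the increasing enumeration of the domain) in which each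
position of the enumeration is either constant or takes each value only countably often. As
domains are bounded below `ω₁`, for any `p` in it all but countably many `q` have their new
points above `dom p` and agree with `p` on the common points.

Such `p` and `q` are amalgamated by appending one coordinate `a x` to every value. Property (*)
yields distinct `a x` with `a x = σ i (a y)` whenever `x < y` are `R_i`-related in `p` or in `q`;
this is consistent because `R_i` determines its left argument from its right one and the new
points of `q` lie above `dom p`, so each `y` has at most one such `x`.
-/

namespace Rrel

variable {σ : ℕ → ℕ → ℕ} {i : ℕ} {s s' t : List ℕ}

theorem left_unique (h : Rrel σ i s t) (h' : Rrel σ i s' t) : s = s' := by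
  obtain ⟨-, hlen, htake, hcoord⟩ := h
  obtain ⟨-, hlen', htake', hcoord'⟩ := h'
  refine List.ext_getElem (hlen.trans hlen'.symm) fun l hl hl' => ?_
  rcases lt_or_ge l i with hli | hli
  · have := congrArg (·[l]?) (htake.trans htake'.symm)
    simpa [hli, hl, hl'] using this
  · have := (hcoord l hli hl).trans (hcoord' l hli hl').symm
    simpa [hl, hl'] using this

theorem append_singleton (h : Rrel σ i s t) (b : ℕ) :
    Rrel σ i (s ++ [σ i b]) (t ++ [b]) := by
  obtain ⟨hi, hlen, htake, hcoord⟩ := h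
  refine ⟨by simp; omega, by simp [hlen], ?_, ?_⟩
  · rw [List.take_append_of_le_length hi.le, List.take_append_of_le_length (hlen ▸ hi.le), htake]
  · intro l hil hl
    simp only [List.length_append, List.length_singleton] at hl
    rcases lt_or_ge l s.length with hls | hls
    · have := hcoord l hil hls
      simpa [List.getD_eq_getElem?_getD, List.getElem?_append_left, hls, hlen ▸ hls] using this
    · obtain rfl : l = s.length := by omega
      simp [hlen]

end Rrel

def RealizesFiniteMaps (σ : ℕ → ℕ → ℕ) : Prop :=
  ∀ N : ℕ, ∀ φ : Fin N → Fin N → ℕ, ∃ n : Fin N → ℕ, Function.Injective n ∧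
    ∀ i j₀ j₁ : Fin N, φ i j₀ = (j₁ : ℕ) → σ i (n j₀) = n j₁

theorem RealizesFiniteMaps.exists_injOn {σ : ℕ → ℕ → ℕ} (hσ : RealizesFiniteMaps σ)
    {α : Type*} (D : Finset α) (n : ℕ) (C : ℕ → α → α → Prop)
    (hC : ∀ i y x x', C i y x → C i y x' → x = x') :
    ∃ a : α → ℕ, Set.InjOn a D ∧
      ∀ i < n, ∀ x ∈ D, ∀ y ∈ D, C i y x → a x = σ i (a y) := by
  classical
  set ix : α → ℕ := D.toList.idxOf
  set K := D.card + n
  have hix_lt : ∀ x ∈ D, ix x < K := fun x hx =>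
    (List.idxOf_lt_length_of_mem (Finset.mem_toList.mpr hx)).trans_le (by simp [K])
  have hix_inj : ∀ x ∈ D, ∀ y ∈ D, ix x = ix y → x = y := fun x hx y _ =>
    (List.idxOf_inj (Finset.mem_toList.mpr hx)).mp
  let φ : Fin K → Fin K → ℕ := fun i j₀ =>
    if h : ∃ x ∈ D, ∃ y ∈ D, ix y = j₀ ∧ C i y x then ix h.choose else K
  obtain ⟨m, hm_inj, hm⟩ := hσ K φ
  refine ⟨fun x => if h : ix x < K then m ⟨ix x, h⟩ else 0, fun x hx y hy hxy => ?_, ?_⟩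
  · simp only [hix_lt x hx, hix_lt y hy, dif_pos] at hxy
    exact hix_inj x hx y hy (Fin.mk.inj_iff.mp (hm_inj hxy))
  · intro i hi x hx y hy hCxy
    have hex : ∃ x ∈ D, ∃ y' ∈ D, ix y' = ix y ∧ C i y' x := ⟨x, hx, y, hy, rfl, hCxy⟩
    obtain ⟨hx', y', hy', hyy', hC'⟩ := hex.choose_spec
    rw [hix_inj y' hy' y hy hyy'] at hC'
    have hφ : φ ⟨i, by omega⟩ ⟨ix y, hix_lt y hy⟩ = ix x := by
      simp only [φ, dif_pos hex, hC i y _ _ hC' hCxy]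
    simpa only [hix_lt x hx, hix_lt y hy, dif_pos] using
      (hm ⟨i, by omega⟩ ⟨ix y, hix_lt y hy⟩ ⟨ix x, hix_lt x hx⟩ hφ).symm

theorem countable_Iic_of_lt_omega1 {o : Ordinal} (h : o < omega1) : (Set.Iic o).Countable := by
  rw [← Order.Iio_succ, ← Cardinal.le_aleph0_iff_set_countable, Cardinal.mk_Iio_ordinal,
    Cardinal.lift_le_aleph0, ← Order.lt_succ_iff, Cardinal.succ_aleph0, ← Cardinal.lt_ord]
  exact (Cardinal.isSuccLimit_ord (Cardinal.aleph0_le_aleph 1)).succ_lt h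

theorem Set.exists_not_countable_inter_preimage_singleton {X γ : Type*} [Countable γ] {s : Set X}
    (hs : ¬ s.Countable) (f : X → γ) : ∃ c, ¬ (s ∩ f ⁻¹' {c}).Countable := by
  by_contra! h
  refine hs ((Set.countable_iUnion h).mono fun x hx => ?_)
  exact Set.mem_iUnion_of_mem (f x) ⟨hx, rfl⟩

theorem Set.exists_mem_notMem_of_not_countable {X : Type*} {s t : Set X} (hs : ¬ s.Countable)
    (ht : t.Countable) : ∃ x ∈ s, x ∉ t :=
  Set.not_subset.mp fun h => hs (ht.mono h)

def ConstOrCountableFibers {X β : Type*} (t : Set X) (g : X → β) : Prop :=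
  (∀ x ∈ t, ∀ y ∈ t, g x = g y) ∨ ∀ v, (t ∩ g ⁻¹' {v}).Countable

theorem ConstOrCountableFibers.mono {X β : Type*} {s t : Set X} {g : X → β}
    (h : ConstOrCountableFibers s g) (hts : t ⊆ s) : ConstOrCountableFibers t g :=
  h.imp (fun h x hx y hy => h x (hts hx) y (hts hy))
    fun h v => (h v).mono (Set.inter_subset_inter_left _ hts)

theorem exists_not_countable_subset_constOrCountableFibers {X β : Type*} (f : ℕ → X → β)
    {s : Set X} (hs : ¬ s.Countable) (m : ℕ) :
    ∃ t ⊆ s, ¬ t.Countable ∧ ∀ k < m, ConstOrCountableFibers t (f k) := by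
  induction m with
  | zero => exact ⟨s, subset_rfl, hs, by simp⟩
  | succ m ih =>
    obtain ⟨t, hts, ht, hgood⟩ := ih
    by_cases hfib : ∀ v, (t ∩ f m ⁻¹' {v}).Countable
    · refine ⟨t, hts, ht, fun k hk => ?_⟩
      rcases Nat.lt_succ_iff_lt_or_eq.mp hk with hk | rfl
      exacts [hgood k hk, .inr hfib]
    · obtain ⟨v, hv⟩ := not_forall.mp hfib
      refine ⟨t ∩ f m ⁻¹' {v}, Set.inter_subset_left.trans hts, hv, fun k hk => ?_⟩
      rcases Nat.lt_succ_iff_lt_or_eq.mp hk with hk | rfl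
      · exact (hgood k hk).mono Set.inter_subset_left
      · exact .inl fun x hx y hy => hx.2.trans hy.2.symm

theorem exists_ne_forall_eq_or_lt {X : Type*} (f : ℕ → X → Ordinal) (N : ℕ) {t : Set X}
    (ht : ¬ t.Countable) (hgood : ∀ k < N, ConstOrCountableFibers t (f k)) {a : X} (ha : a ∈ t)
    (hfa : ∀ j < N, f j a < omega1) :
    ∃ b ∈ t, b ≠ a ∧ ∀ k < N, f k b = f k a ∨ ∀ j < N, f j a < f k b := by
  let bad : Set X := ⋃ k ∈ {k | k < N ∧ ∀ v, (t ∩ f k ⁻¹' {v}).Countable},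
    ⋃ j ∈ Set.Iio N, t ∩ {x | f k x ≤ f j a}
  have hbad : bad.Countable := by
    refine ((Set.finite_Iio N).subset fun k hk => hk.1).countable.biUnion fun k hk =>
      (Set.finite_Iio N).countable.biUnion fun j hj => ?_
    refine ((countable_Iic_of_lt_omega1 (hfa j hj)).biUnion fun v _ => hk.2 v).mono ?_
    exact fun x hx => Set.mem_biUnion (x := f k x) hx.2 ⟨hx.1, rfl⟩
  obtain ⟨b, hbt, hb⟩ := Set.exists_mem_notMem_of_not_countable ht (hbad.insert a)
  refine ⟨b, hbt, fun hba => hb (.inl hba), fun k hk => ?_⟩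
  rcases hgood k hk with hconst | hfib
  · exact .inl (hconst b hbt a ha)
  · refine .inr fun j hj => lt_of_not_ge fun hle => hb (.inr ?_)
    exact Set.mem_biUnion (x := k) ⟨hk, hfib⟩ (Set.mem_biUnion (x := j) hj ⟨hbt, hle⟩)

namespace QCond

variable {σ : ℕ → ℕ → ℕ}

def Compatible (p q : QCond σ) : Prop := ∃ r, QLe σ p r ∧ QLe σ q r

def Pattern (p : QCond σ) (i : ℕ) (x y : Ordinal) : Prop :=
  x ∈ p.dom ∧ y ∈ p.dom ∧ x < y ∧ Rrel σ i (p.val x) (p.val y)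

theorem Pattern.left_unique {p : QCond σ} {i : ℕ} {x x' y : Ordinal} (h : p.Pattern i x y)
    (h' : p.Pattern i x' y) : x = x' :=
  p.inj x h.1 x' h'.1 (h.2.2.2.left_unique h'.2.2.2)

theorem le_of_val_eq_append {p r : QCond σ} (a : Ordinal → ℕ) (hdom : p.dom ⊆ r.dom)
    (hval : ∀ x ∈ p.dom, r.val x = p.val x ++ [a x])
    (hpat : ∀ i < p.n, ∀ x y, p.Pattern i x y → a x = σ i (a y)) : QLe σ p r := by
  refine ⟨hdom, fun x hx => hval x hx ▸ List.prefix_append _ _, ?_⟩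
  intro x hx y hy hxy i hi hR
  rw [hval x hx, hval y hy, hpat i hi x y ⟨hx, hy, hxy, hR⟩]
  exact hR.append_singleton (a y)

structure Amalgamable (p q : QCond σ) : Prop where
  n_eq : p.n = q.n
  val_eq : ∀ δ ∈ p.dom, δ ∈ q.dom → p.val δ = q.val δ
  lt_of_notMem : ∀ x ∈ q.dom, x ∉ p.dom → ∀ z ∈ p.dom, z < x

namespace Amalgamable

variable {p q : QCond σ}

theorem pattern_left (h : Amalgamable p q) {i : ℕ} {x y : Ordinal} (hq : q.Pattern i x y)
    (hy : y ∈ p.dom) : p.Pattern i x y := by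
  obtain ⟨hx, hyq, hxy, hR⟩ := hq
  have hxp : x ∈ p.dom := by_contra fun hxp => (h.lt_of_notMem x hx hxp y hy).not_gt hxy
  exact ⟨hxp, hy, hxy, by rwa [h.val_eq x hxp hx, h.val_eq y hy hyq]⟩

theorem pattern_unique (h : Amalgamable p q) {i : ℕ} {x x' y : Ordinal}
    (hx : p.Pattern i x y ∨ q.Pattern i x y) (hx' : p.Pattern i x' y ∨ q.Pattern i x' y) :
    x = x' := by
  rcases hx with hx | hx <;> rcases hx' with hx' | hx'
  · exact hx.left_unique hx'
  · exact hx.left_unique (h.pattern_left hx' hx.2.1)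
  · exact (h.pattern_left hx hx'.2.1).left_unique hx'
  · exact hx.left_unique hx'

theorem compatible (h : Amalgamable p q) (hσ : RealizesFiniteMaps σ) : p.Compatible q := by
  classical
  obtain ⟨a, ha_inj, ha⟩ := hσ.exists_injOn (p.dom ∪ q.dom) p.n
    (fun i y x => p.Pattern i x y ∨ q.Pattern i x y) fun _ _ _ _ => h.pattern_unique
  let base : Ordinal → List ℕ := fun x => if x ∈ p.dom then p.val x else q.val x
  have base_q : ∀ x ∈ q.dom, base x = q.val x := fun x hx => by
    by_cases hxp : x ∈ p.dom
    · simp only [base, if_pos hxp, h.val_eq x hxp hx]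
    · simp only [base, if_neg hxp]
  have base_len : ∀ x ∈ p.dom ∪ q.dom, (base x).length = p.n := fun x hx => by
    by_cases hxp : x ∈ p.dom
    · simp only [base, if_pos hxp, p.len x hxp]
    · simp only [base, if_neg hxp, q.len x ((Finset.mem_union.mp hx).resolve_left hxp), h.n_eq]
  let r : QCond σ :=
    { dom := p.dom ∪ q.dom
      sub := fun x hx => (Finset.mem_union.mp hx).elim (p.sub x) (q.sub x)
      n := p.n + 1
      val := fun x => base x ++ [a x]
      len := fun x hx => by simp [base_len x hx]
      inj := fun x hx y hy hxy => ha_inj hx hy <| List.singleton_inj.mp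
        (List.append_inj' hxy rfl).2 }
  have mem_dom : ∀ {i x y}, p.Pattern i x y ∨ q.Pattern i x y →
      x ∈ p.dom ∪ q.dom ∧ y ∈ p.dom ∪ q.dom := by
    rintro i x y (⟨hx, hy, -⟩ | ⟨hx, hy, -⟩) <;> simp [hx, hy]
  have pattern_r : ∀ i < p.n, ∀ x y, p.Pattern i x y ∨ q.Pattern i x y → a x = σ i (a y) :=
    fun i hi x y hxy => ha i hi x (mem_dom hxy).1 y (mem_dom hxy).2 hxy
  refine ⟨r, le_of_val_eq_append a Finset.subset_union_left (fun x hx => by simp [r, base, hx])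
    fun i hi x y hxy => pattern_r i hi x y (.inl hxy),
    le_of_val_eq_append a Finset.subset_union_right (fun x hx => by simp [r, base_q x hx])
    fun i hi x y hxy => pattern_r i (h.n_eq ▸ hi) x y (.inr hxy)⟩

end Amalgamable

noncomputable def profile (p : QCond σ) : ℕ × List (List ℕ) :=
  (p.n, (p.dom.sort (· ≤ ·)).map p.val)

noncomputable def nthDom (p : QCond σ) (k : ℕ) : Ordinal :=
  (p.dom.sort (· ≤ ·)).getD k 0

theorem nthDom_mem (p : QCond σ) {k : ℕ} (hk : k < p.dom.card) : p.nthDom k ∈ p.dom := by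
  rw [← Finset.length_sort (· ≤ ·)] at hk
  rw [nthDom, List.getD_eq_getElem _ _ hk, ← Finset.mem_sort (· ≤ ·)]
  exact List.getElem_mem hk

theorem exists_nthDom_eq (p : QCond σ) {δ : Ordinal} (hδ : δ ∈ p.dom) :
    ∃ k < p.dom.card, p.nthDom k = δ := by
  obtain ⟨k, hk, rfl⟩ := List.mem_iff_getElem.mp ((Finset.mem_sort (· ≤ ·)).mpr hδ)
  exact ⟨k, Finset.length_sort (α := Ordinal) (· ≤ ·) ▸ hk, List.getD_eq_getElem _ _ hk⟩

theorem nthDom_inj (p : QCond σ) {k k' : ℕ} (hk : k < p.dom.card) (hk' : k' < p.dom.card) :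
    p.nthDom k = p.nthDom k' ↔ k = k' := by
  rw [← Finset.length_sort (· ≤ ·)] at hk hk'
  rw [nthDom, nthDom, List.getD_eq_getElem _ _ hk, List.getD_eq_getElem _ _ hk']
  exact (Finset.sort_nodup _ _).getElem_inj_iff

theorem val_nthDom (p : QCond σ) {k : ℕ} (hk : k < p.dom.card) :
    p.val (p.nthDom k) = p.profile.2.getD k [] := by
  rw [← Finset.length_sort (· ≤ ·)] at hk
  rw [profile, nthDom, List.getD_eq_getElem _ _ hk,
    List.getD_eq_getElem _ _ ((List.length_map _).symm ▸ hk), List.getElem_map]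

theorem card_dom_eq_length_profile (p : QCond σ) : p.dom.card = p.profile.2.length := by
  simp [profile]

theorem amalgamable_of_profile_eq {p q : QCond σ} (hpq : p.profile = q.profile)
    (hq : ∀ k < p.dom.card,
      q.nthDom k = p.nthDom k ∨ ∀ j < p.dom.card, p.nthDom j < q.nthDom k) :
    Amalgamable p q := by
  have hcard : q.dom.card = p.dom.card := by
    rw [card_dom_eq_length_profile, card_dom_eq_length_profile, hpq]
  refine ⟨congrArg Prod.fst hpq, fun δ hδp hδq => ?_, fun x hxq hxp z hz => ?_⟩
  · obtain ⟨k, hk, rfl⟩ := p.exists_nthDom_eq hδp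
    obtain ⟨k', hk', hk'δ⟩ := q.exists_nthDom_eq hδq
    rw [hcard] at hk'
    rcases hq k' hk' with heq | hlt
    · obtain rfl : k = k' := (p.nthDom_inj hk hk').mp (hk'δ.symm.trans heq)
      rw [val_nthDom _ hk, ← hk'δ, val_nthDom _ (hcard ▸ hk), hpq]
    · exact absurd (hk'δ ▸ hlt k hk) (lt_irrefl _)
  · obtain ⟨k, hk, rfl⟩ := q.exists_nthDom_eq hxq
    obtain ⟨j, hj, rfl⟩ := p.exists_nthDom_eq hz
    rw [hcard] at hk
    exact (hq k hk).resolve_left (fun heq => hxp (heq ▸ p.nthDom_mem hk)) j hj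

theorem exists_ne_compatible (hσ : RealizesFiniteMaps σ) {A : Set (QCond σ)}
    (hA : ¬ A.Countable) : ∃ p ∈ A, ∃ q ∈ A, p ≠ q ∧ p.Compatible q := by
  obtain ⟨P, hP⟩ := Set.exists_not_countable_inter_preimage_singleton hA profile
  have hcard : ∀ p ∈ A ∩ profile ⁻¹' {P}, p.dom.card = P.2.length := fun p hp => by
    rw [card_dom_eq_length_profile, hp.2]
  obtain ⟨t, htA, ht, hgood⟩ :=
    exists_not_countable_subset_constOrCountableFibers (fun k p => nthDom p k) hP P.2.length
  obtain ⟨p, hp⟩ := Set.Infinite.nonempty fun hfin => ht hfin.countable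
  obtain ⟨q, hq, hqp, hext⟩ := exists_ne_forall_eq_or_lt (fun k p => nthDom p k) P.2.length ht
    hgood hp fun k hk => p.sub _ (p.nthDom_mem (hcard p (htA hp) ▸ hk))
  refine ⟨p, (htA hp).1, q, (htA hq).1, hqp.symm, Amalgamable.compatible ?_ hσ⟩
  refine amalgamable_of_profile_eq ((htA hp).2.trans (htA hq).2.symm) ?_
  rw [hcard p (htA hp)]
  exact hext

end QCond

/-- Q satisfies the countable chain condition: every antichain is
countable. (Here σ is assumed to satisfy the absorption property (*).) -/
theorem stmt3 (σ : ℕ → ℕ → ℕ)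
    (hσ : ∀ N : ℕ, ∀ φ : Fin N → Fin N → ℕ,
      ∃ n : Fin N → ℕ, Function.Injective n ∧
        ∀ i j₀ j₁ : Fin N, φ i j₀ = (j₁ : ℕ) → σ i (n j₀) = n j₁) :
    ∀ A : Set (QCond σ),
      (∀ p ∈ A, ∀ q ∈ A, p ≠ q → ¬∃ r : QCond σ, QLe σ p r ∧ QLe σ q r) →
      A.Countable := by
  intro A hA
  by_contra hunc
  obtain ⟨p, hp, q, hq, hpq, hcompat⟩ := QCond.exists_ne_compatible hσ hunc
  exact hA p hp q hq hpq hcompat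
end

section
/- For distinct x, y ∈ 2^ω let h(x,y) = min{n : x(n) ≠ y(n)}. For a set b ⊆ ω and a set M ⊆ 2^ω, the following are equivalent: (ii) there exists an equivalence relation R on 2^ω with countably many equivalence classes such that h(x,y) ∈ b for all distinct R-equivalent x, y ∈ M; (iii) there exist sets Y_n ⊆ 2^ω (n ∈ ω) with M ⊆ ⋃_n Y_n and h(x,y) ∈ b for all distinct x, y lying in a common Y_n; (iv) there exists a function f : 2^{<ω} → 2 such that for every x ∈ M there is m ∈ ω with: for all n > m, if n ∉ b then f(x↾n) = x(n). -/
/-- h(x,y): the least coordinate at which x and y differ. -/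
noncomputable def hmin (x y : ℕ → Bool) : ℕ := sInf {n | x n ≠ y n}

def listOf (x : ℕ → Bool) (n : ℕ) : List Bool := List.ofFn (fun i : Fin n => x i)

lemma hmin_spec {x y : ℕ → Bool} (h : x ≠ y) :
    x (hmin x y) ≠ y (hmin x y) ∧ ∀ k < hmin x y, x k = y k := by
  have hne : {n | x n ≠ y n}.Nonempty := by
    by_contra hc
    rw [Set.not_nonempty_iff_eq_empty] at hc
    apply h
    funext n
    by_contra hn
    exact absurd (Set.eq_empty_iff_forall_notMem.mp hc n) (by simp [hn])
  refine ⟨Nat.sInf_mem hne, fun k hk => ?_⟩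
  by_contra hkne
  exact absurd (Nat.sInf_le (by exact hkne)) (not_le.mpr hk)

lemma hmin_eq {x y : ℕ → Bool} (n : ℕ) (hlt : ∀ k < n, x k = y k) (hn : x n ≠ y n) :
    hmin x y = n := by
  have h : x ≠ y := fun he => hn (by rw [he])
  obtain ⟨h1, h2⟩ := hmin_spec h
  rcases lt_trichotomy (hmin x y) n with hc | hc | hc
  · exact absurd (hlt _ hc) h1
  · exact hc
  · exact absurd (h2 n hc) hn

lemma listOf_eq_iff {x y : ℕ → Bool} {n : ℕ} :
    listOf x n = listOf y n ↔ ∀ k < n, x k = y k := by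
  unfold listOf
  rw [List.ofFn_inj]
  constructor
  · intro h k hk
    exact congrFun h ⟨k, hk⟩
  · intro h
    funext i
    exact h i i.2

lemma monotone_bdd_stab (g : ℕ → ℕ) (K : ℕ) (hmono : Monotone g) (hbdd : ∀ n, g n ≤ K) :
    ∃ m, ∀ n ≥ m, g n = g m := by
  by_contra hc
  push_neg at hc
  have key : ∀ j, ∃ n, g 0 + j ≤ g n := by
    intro j
    induction j with
    | zero => exact ⟨0, by simp⟩
    | succ j ih =>
      obtain ⟨n, hn⟩ := ih
      obtain ⟨n', hn', hne⟩ := hc n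
      have : g n < g n' := lt_of_le_of_ne (hmono hn') (Ne.symm hne)
      exact ⟨n', by omega⟩
  obtain ⟨n, hn⟩ := key (K + 1)
  have := hbdd n
  omega

/-- equivalence of conditions (ii), (iii), (iv) characterizing
membership in the Raisonnier filter associated to M ⊆ 2^ω and b ⊆ ω. -/
theorem stmt9 (M : Set (ℕ → Bool)) (b : Set ℕ) :
    ((∃ R : (ℕ → Bool) → (ℕ → Bool) → Prop, Equivalence R ∧
        (Set.range fun x => {y | R x y}).Countable ∧
        ∀ x ∈ M, ∀ y ∈ M, x ≠ y → R x y → hmin x y ∈ b) ↔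
      (∃ Y : ℕ → Set (ℕ → Bool), M ⊆ ⋃ n, Y n ∧
        ∀ n, ∀ x ∈ Y n, ∀ y ∈ Y n, x ≠ y → hmin x y ∈ b)) ∧
    ((∃ Y : ℕ → Set (ℕ → Bool), M ⊆ ⋃ n, Y n ∧
        ∀ n, ∀ x ∈ Y n, ∀ y ∈ Y n, x ≠ y → hmin x y ∈ b) ↔
      (∃ f : List Bool → Bool, ∀ x ∈ M, ∃ m : ℕ, ∀ n > m,
        n ∉ b → f (listOf x n) = x n)) := by
  constructor
  · constructor
    · -- (ii) → (iii)
      rintro ⟨R, hR, hcnt, hcond⟩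
      have hne : (Set.range fun x => {y | R x y}).Nonempty :=
        ⟨{y | R (fun _ => false) y}, ⟨_, rfl⟩⟩
      obtain ⟨e, he⟩ := hcnt.exists_eq_range hne
      refine ⟨fun n => e n ∩ M, ?_, ?_⟩
      · intro x hx
        have : {y | R x y} ∈ Set.range fun x => {y | R x y} := ⟨x, rfl⟩
        rw [he] at this
        obtain ⟨n, hn⟩ := this
        exact Set.mem_iUnion.mpr ⟨n, by rw [hn]; exact ⟨hR.refl x, hx⟩⟩
      · intro n x hx y hy hxy
        have hmem : e n ∈ Set.range fun x => {y | R x y} := by rw [he]; exact ⟨n, rfl⟩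
        obtain ⟨z, hz⟩ := hmem
        have hzx : R z x := by have h := hx.1; rw [← hz] at h; exact h
        have hzy : R z y := by have h := hy.1; rw [← hz] at h; exact h
        exact hcond x hx.2 y hy.2 hxy (hR.trans (hR.symm hzx) hzy)
    · -- (iii) → (ii)
      rintro ⟨Y, hcov, hcond⟩
      classical
      set g : (ℕ → Bool) → ℕ := fun x => sInf {n | x ∈ Y n} with hg
      have hgmem : ∀ x ∈ M, x ∈ Y (g x) := by
        intro x hx
        have : {n | x ∈ Y n}.Nonempty := by
          obtain ⟨_, ⟨n, rfl⟩, hn⟩ := hcov hx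
          exact ⟨n, hn⟩
        exact Nat.sInf_mem this
      refine ⟨fun x y => (x ∉ M ∧ y ∉ M) ∨ (x ∈ M ∧ y ∈ M ∧ g x = g y), ?_, ?_, ?_⟩
      · constructor
        · intro x; by_cases hx : x ∈ M
          · exact Or.inr ⟨hx, hx, rfl⟩
          · exact Or.inl ⟨hx, hx⟩
        · rintro x y (⟨h1, h2⟩ | ⟨h1, h2, h3⟩)
          · exact Or.inl ⟨h2, h1⟩
          · exact Or.inr ⟨h2, h1, h3.symm⟩
        · rintro x y z (⟨h1, h2⟩ | ⟨h1, h2, h3⟩) (⟨h4, h5⟩ | ⟨h4, h5, h6⟩)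
          · exact Or.inl ⟨h1, h5⟩
          · exact absurd h4 h2
          · exact absurd h2 h4
          · exact Or.inr ⟨h1, h5, h3.trans h6⟩
      · apply Set.Countable.mono _
          (Set.countable_range (fun o : Option ℕ =>
            Option.elim o Mᶜ (fun n => {y | y ∈ M ∧ g y = n})))
        rintro s ⟨x, rfl⟩
        by_cases hx : x ∈ M
        · refine ⟨some (g x), ?_⟩
          ext y
          simp only [Option.elim, Set.mem_setOf_eq]
          constructor
          · rintro ⟨hy, h2⟩; exact Or.inr ⟨hx, hy, h2.symm⟩
          · rintro (⟨h1, _⟩ | ⟨_, h2, h3⟩)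
            · exact absurd hx h1
            · exact ⟨h2, h3.symm⟩
        · refine ⟨none, ?_⟩
          ext y
          simp only [Option.elim, Set.mem_compl_iff, Set.mem_setOf_eq]
          constructor
          · intro hy; exact Or.inl ⟨hx, hy⟩
          · rintro (⟨_, h2⟩ | ⟨h1, _⟩)
            · exact h2
            · exact absurd h1 hx
      · rintro x hx y hy hxy (⟨h1, _⟩ | ⟨_, _, h3⟩)
        · exact absurd hx h1
        · exact hcond (g x) x (hgmem x hx) y (by rw [h3]; exact hgmem y hy) hxy
  · constructor
    · -- (iii) → (iv)
      rintro ⟨Y, hcov, hcond⟩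
      classical
      set A : List Bool → Set ℕ := fun s => {k | ∃ z ∈ Y k, listOf z s.length = s} with hA
      refine ⟨fun s => if h : ∃ z, z ∈ Y (sInf (A s)) ∧ listOf z s.length = s
          then h.choose s.length else false, ?_⟩
      intro x hx
      obtain ⟨_, ⟨K, rfl⟩, hK⟩ := hcov hx
      -- g n := sInf (A (listOf x n)) is monotone in n, bounded by K
      have hKmem : ∀ n, K ∈ A (listOf x n) := by
        intro n
        exact ⟨x, hK, by rw [listOf]; simp [listOf]⟩
      have hlen : ∀ n, (listOf x n).length = n := by
        intro n; simp [listOf]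
      set g : ℕ → ℕ := fun n => sInf (A (listOf x n)) with hgdef
      have hgbdd : ∀ n, g n ≤ K := fun n => Nat.sInf_le (hKmem n)
      have hgmono : Monotone g := by
        apply monotone_nat_of_le_succ
        intro n
        have hne1 : (A (listOf x (n + 1))).Nonempty := ⟨K, hKmem (n + 1)⟩
        obtain ⟨z, hz, hzl⟩ := Nat.sInf_mem hne1
        apply Nat.sInf_le
        refine ⟨z, hz, ?_⟩
        rw [hlen] at hzl ⊢
        rw [listOf_eq_iff] at hzl ⊢
        exact fun j hj => hzl j (by omega)
      obtain ⟨m, hm⟩ := monotone_bdd_stab g K hgmono hgbdd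
      refine ⟨m, fun n hn hnb => ?_⟩
      -- witnesses
      have hAn : ∃ z, z ∈ Y (sInf (A (listOf x n))) ∧ listOf z (listOf x n).length = listOf x n := by
        have : (A (listOf x n)).Nonempty := ⟨K, hKmem n⟩
        have hmem := Nat.sInf_mem this
        obtain ⟨z, hz, hzl⟩ := hmem
        exact ⟨z, hz, hzl⟩
      beta_reduce
      rw [dif_pos hAn]
      obtain ⟨hzY, hzl⟩ := hAn.choose_spec
      set z : ℕ → Bool := hAn.choose with hzdef
      rw [hlen n] at hzl
      rw [hlen n]
      -- z ∈ Y (g n), with g n = g m = g (n+1)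
      have hgn : g n = g m := hm n (le_of_lt hn)
      have hgn1 : g (n + 1) = g m := hm (n + 1) (by omega)
      -- witness at level n+1
      have hAn1 : (A (listOf x (n + 1))).Nonempty := ⟨K, hKmem (n + 1)⟩
      obtain ⟨z', hz'Y, hz'l⟩ := Nat.sInf_mem hAn1
      rw [hlen] at hz'l
      rw [listOf_eq_iff] at hz'l hzl
      -- z' n = x n
      have hz'n : z' n = x n := hz'l n (by omega)
      -- z, z' ∈ Y (g m)
      have hzY' : z ∈ Y (g m) := by rw [← hgn]; exact hzY
      have hz'Y' : z' ∈ Y (g m) := by rw [← hgn1]; exact hz'Y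
      -- if z n ≠ x n then z ≠ z' and hmin z z' = n ∉ b, contradiction
      by_contra hne
      have hzz' : z n ≠ z' n := by rw [hz'n]; exact hne
      have hagree : ∀ k < n, z k = z' k := fun k hk => (hzl k hk).trans (hz'l k (by omega)).symm
      have := hcond (g m) z hzY' z' hz'Y' (fun he => hzz' (by rw [he]))
      rw [hmin_eq n hagree hzz'] at this
      exact hnb this
    · -- (iv) → (iii)
      rintro ⟨f, hf⟩
      classical
      obtain ⟨e, he⟩ := exists_surjective_nat (ℕ × List Bool)
      refine ⟨fun i => {x | listOf x ((e i).1 + 1) = (e i).2 ∧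
          ∀ n > (e i).1, n ∉ b → f (listOf x n) = x n}, ?_, ?_⟩
      · intro x hx
        obtain ⟨m, hm⟩ := hf x hx
        obtain ⟨i, hi⟩ := he (m, listOf x (m + 1))
        exact Set.mem_iUnion.mpr ⟨i, by rw [hi]; exact ⟨rfl, hm⟩⟩
      · rintro i x ⟨hx1, hx2⟩ y ⟨hy1, hy2⟩ hxy
        set m := (e i).1
        have hagree : ∀ k < m + 1, x k = y k := by
          rw [← listOf_eq_iff, hx1, hy1]
        set n := hmin x y with hn
        obtain ⟨hd, hlo⟩ := hmin_spec hxy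
        have hnm : m < n := by
          by_contra hc
          push_neg at hc
          exact hd (hagree n (by omega))
        by_contra hnb
        have h1 := hx2 n hnm hnb
        have h2 := hy2 n hnm hnb
        have hl : listOf x n = listOf y n := listOf_eq_iff.mpr hlo
        rw [hl, h2] at h1
        exact hd h1.symm
end

section
/- Let P₁* (Todorcevic's forcing) consist of finite sets p of convergent sequences of real numbers s with lim s ∉ s, such that for all distinct s, t ∈ p, lim s ∉ t; ordered by inclusion. For rational d, the translation φ_d(p) = {s + d : s ∈ p} is an automorphism of P₁*, and for each p ∈ P₁* the set {φ_d(p) : d ∈ ℚ} is predense in P₁* (every condition is compatible with some rational translate of p). -/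
/-- (S, l) is a convergent sequence of reals (viewed as a set) with limit l ∉ S. -/
def IsCSeq (s : Set ℝ × ℝ) : Prop :=
  s.1.Infinite ∧ (∀ ε > (0:ℝ), {x ∈ s.1 | ε ≤ |x - s.2|}.Finite) ∧ s.2 ∉ s.1

/-- A condition of Todorcevic's forcing P₁*: a finite set of convergent
sequences such that the limit of one is never a member of another. -/
def IsCond (p : Set (Set ℝ × ℝ)) : Prop :=
  p.Finite ∧ (∀ s ∈ p, IsCSeq s) ∧
    ∀ s ∈ p, ∀ t ∈ p, s ≠ t → s.2 ∉ t.1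

/-- Translation of a condition by d. -/
def transl (d : ℝ) (p : Set (Set ℝ × ℝ)) : Set (Set ℝ × ℝ) :=
  (fun s => ((fun x => x + d) '' s.1, s.2 + d)) '' p

/-! A convergent sequence together with its limit is a bounded set of reals, so every condition
mentions only a bounded set of reals, its `support`. Translating `p` by a large enough rational
therefore moves its support off that of `q`, and two conditions with disjoint supports are
compatible: a limit point of one can never be a member of a sequence of the other. -/

open Bornology Metric

def support (p : Set (Set ℝ × ℝ)) : Set ℝ :=
  ⋃ s ∈ p, insert s.2 s.1

theorem IsCSeq.transl {s : Set ℝ × ℝ} (h : IsCSeq s) (d : ℝ) :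
    IsCSeq ((fun x => x + d) '' s.1, s.2 + d) := by
  obtain ⟨hinf, htail, hlim⟩ := h
  refine ⟨hinf.image (add_left_injective d).injOn, fun ε hε => ?_, ?_⟩
  · refine ((htail ε hε).image (· + d)).subset ?_
    rintro _ ⟨⟨y, hy, rfl⟩, hfar⟩
    exact ⟨y, ⟨hy, by simpa using hfar⟩, rfl⟩
  · rintro ⟨y, hy, hyd⟩
    exact hlim (add_right_cancel hyd ▸ hy)

theorem IsCond.transl {p : Set (Set ℝ × ℝ)} (h : IsCond p) (d : ℝ) :
    IsCond (transl d p) := by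
  obtain ⟨hfin, hseq, hsep⟩ := h
  refine ⟨hfin.image _, ?_, ?_⟩
  · rintro _ ⟨s, hs, rfl⟩
    exact (hseq s hs).transl d
  · rintro _ ⟨s, hs, rfl⟩ _ ⟨t, ht, rfl⟩ hst ⟨y, hy, hyd⟩
    exact hsep s hs t ht (fun h => hst (h ▸ rfl)) (add_right_cancel hyd ▸ hy)

theorem transl_neg_transl (d : ℝ) (p : Set (Set ℝ × ℝ)) :
    transl (-d) (transl d p) = p := by
  simp only [transl, Set.image_image, add_neg_cancel_right, Set.image_id', Prod.mk.eta]

theorem isCond_transl_iff (d : ℝ) (p : Set (Set ℝ × ℝ)) :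
    IsCond (transl d p) ↔ IsCond p :=
  ⟨fun h => transl_neg_transl d p ▸ h.transl (-d), fun h => h.transl d⟩

theorem support_transl (d : ℝ) (p : Set (Set ℝ × ℝ)) :
    support (transl d p) = (fun x => x + d) '' support p := by
  simp only [support, transl, Set.biUnion_image, Set.image_iUnion₂, Set.image_insert_eq]

theorem IsCSeq.isBounded {s : Set ℝ × ℝ} (h : IsCSeq s) :
    IsBounded (insert s.2 s.1) := by
  refine IsBounded.insert ?_ s.2
  refine ((h.2.1 1 one_pos).isBounded.union (isBounded_closedBall (x := s.2) (r := 1))).subset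
    fun x hx => ?_
  rcases le_or_gt 1 |x - s.2| with hfar | hnear
  · exact Or.inl ⟨hx, hfar⟩
  · exact Or.inr (mem_closedBall.mpr hnear.le)

theorem IsCond.isBounded_support {p : Set (Set ℝ × ℝ)} (h : IsCond p) :
    IsBounded (support p) :=
  (isBounded_biUnion h.1).mpr fun s hs => (h.2.1 s hs).isBounded

theorem exists_rat_disjoint_image_add {A B : Set ℝ} (hA : IsBounded A) (hB : IsBounded B) :
    ∃ d : ℚ, Disjoint ((fun x => x + (d : ℝ)) '' A) B := by
  obtain ⟨M, hM⟩ := (hA.union hB).subset_closedBall 0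
  obtain ⟨d, hd⟩ := exists_rat_gt (2 * M)
  refine ⟨d, Set.disjoint_left.mpr ?_⟩
  rintro _ ⟨x, hx, rfl⟩ hxB
  have hx' := abs_le.mp (mem_closedBall_zero_iff.mp (hM (Or.inl hx)))
  have hy' := abs_le.mp (mem_closedBall_zero_iff.mp (hM (Or.inr hxB)))
  linarith [hx'.1, hy'.2]

theorem IsCond.union {p q : Set (Set ℝ × ℝ)} (hp : IsCond p) (hq : IsCond q)
    (hpq : Disjoint (support p) (support q)) : IsCond (p ∪ q) := by
  have lim_mem {r} {s : Set ℝ × ℝ} (hs : s ∈ r) : s.2 ∈ support r :=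
    Set.mem_biUnion hs (Set.mem_insert _ _)
  have mem {r} {s : Set ℝ × ℝ} {x} (hs : s ∈ r) (hx : x ∈ s.1) : x ∈ support r :=
    Set.mem_biUnion hs (Set.mem_insert_of_mem _ hx)
  refine ⟨hp.1.union hq.1, fun s hs => hs.elim (hp.2.1 s) (hq.2.1 s), ?_⟩
  rintro s (hs | hs) t (ht | ht) hst hst'
  · exact hp.2.2 s hs t ht hst hst'
  · exact hpq.notMem_of_mem_left (lim_mem hs) (mem ht hst')
  · exact hpq.notMem_of_mem_left (mem ht hst') (lim_mem hs)
  · exact hq.2.2 s hs t ht hst hst'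

/-- φ_d is an automorphism of P₁* (it preserves conditions, the
order being inclusion which it clearly preserves, and is inverted by φ_{-d}),
and for each p the set {φ_d(p) : d ∈ ℚ} is predense: every condition q is
compatible with some rational translate of p. -/
theorem stmt11 :
    (∀ d : ℚ, ∀ p : Set (Set ℝ × ℝ), IsCond p ↔ IsCond (transl d p)) ∧
    (∀ d : ℚ, ∀ p : Set (Set ℝ × ℝ), transl (-(d:ℝ)) (transl d p) = p) ∧
    (∀ p q : Set (Set ℝ × ℝ), IsCond p → IsCond q →
      ∃ d : ℚ, IsCond (transl d p ∪ q)) := by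
  refine ⟨fun d p => (isCond_transl_iff d p).symm, fun d p => transl_neg_transl d p, ?_⟩
  intro p q hp hq
  obtain ⟨d, hd⟩ := exists_rat_disjoint_image_add hp.isBounded_support hq.isBounded_support
  exact ⟨d, (hp.transl d).union hq (support_transl d p ▸ hd)⟩
end

section
/- For any two conditions p₁, p₂ in Todorcevic's forcing P₁* (finite sets of convergent real sequences s with lim s ∉ s such that limits of distinct members avoid each other), the set D = {a − b : a ∈ s ∪ {lim s}, b ∈ r ∪ {lim r}, s ∈ p₁, r ∈ p₂} of differences is a meager (indeed countable union of convergent-sequence-with-limit sets, hence nowhere dense union) subset of ℝ; consequently there exists a rational d with −d ∉ D, and then φ_d(p₁) = {s + d : s ∈ p₁} is compatible with p₂. -/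
/-- The difference set D of two conditions. -/
def diffSet (p₁ p₂ : Set (Set ℝ × ℝ)) : Set ℝ :=
  {z | ∃ s ∈ p₁, ∃ r ∈ p₂, ∃ a ∈ s.1 ∪ {s.2}, ∃ b ∈ r.1 ∪ {r.2}, z = a - b}

lemma cseq_countable {s : Set ℝ × ℝ} (h : IsCSeq s) : s.1.Countable := by
  have hsub : s.1 ⊆ ⋃ n : ℕ, {x ∈ s.1 | 1/(n+1) ≤ |x - s.2|} := by
    intro x hx
    have hne : x ≠ s.2 := fun he => h.2.2 (he ▸ hx)
    have hpos : 0 < |x - s.2| := abs_pos.2 (sub_ne_zero.2 hne)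
    obtain ⟨n, hn⟩ := exists_nat_gt (1 / |x - s.2|)
    refine Set.mem_iUnion.2 ⟨n, hx, ?_⟩
    rw [div_le_iff₀ (by positivity)]
    rw [div_lt_iff₀ hpos] at hn
    nlinarith
  exact (Set.countable_iUnion fun n =>
    (h.2.1 _ (by positivity)).countable).mono hsub

lemma K_compact {s : Set ℝ × ℝ} (h : IsCSeq s) : IsCompact (s.1 ∪ {s.2}) := by
  rw [Metric.isCompact_iff_isClosed_bounded]
  constructor
  · -- closed
    rw [← closure_subset_iff_isClosed]
    intro y hy
    by_contra hyK
    have hne : y ≠ s.2 := fun he => hyK (Or.inr (by simp [he]))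
    set ε := |y - s.2| with hε
    have hεpos : 0 < ε := abs_pos.2 (sub_ne_zero.2 hne)
    have hF : {x ∈ s.1 | ε/2 ≤ |x - s.2|}.Finite := h.2.1 _ (by positivity)
    have hsub : s.1 ∪ {s.2} ⊆ ({x ∈ s.1 | ε/2 ≤ |x - s.2|} ∪ {s.2}) ∪
        Metric.closedBall s.2 (ε/2) := by
      intro x hx
      rcases hx with hx | hx
      · rcases le_or_gt (ε/2) (|x - s.2|) with hc | hc
        · exact Or.inl (Or.inl ⟨hx, hc⟩)
        · exact Or.inr (by simpa [Metric.mem_closedBall, Real.dist_eq] using hc.le)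
      · exact Or.inl (Or.inr hx)
    have hcl : closure (s.1 ∪ {s.2}) ⊆ ({x ∈ s.1 | ε/2 ≤ |x - s.2|} ∪ {s.2}) ∪
        Metric.closedBall s.2 (ε/2) :=
      closure_minimal hsub (((hF.union (Set.finite_singleton _)).isClosed).union
        Metric.isClosed_closedBall)
    rcases hcl hy with hc | hc
    · rcases hc with hc | hc
      · exact hyK (Or.inl hc.1)
      · exact hyK (Or.inr hc)
    · have : ε ≤ ε/2 := by
        simpa [Metric.mem_closedBall, Real.dist_eq, hε] using hc
      linarith
  · -- bounded
    have hF : {x ∈ s.1 | 1 ≤ |x - s.2|}.Finite := h.2.1 1 one_pos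
    have hsub : s.1 ∪ {s.2} ⊆ {x ∈ s.1 | 1 ≤ |x - s.2|} ∪ Metric.closedBall s.2 1 := by
      intro x hx
      rcases hx with hx | hx
      · rcases le_or_gt 1 (|x - s.2|) with hc | hc
        · exact Or.inl ⟨hx, hc⟩
        · exact Or.inr (by simpa [Metric.mem_closedBall, Real.dist_eq] using hc.le)
      · exact Or.inr (by simp [Set.mem_singleton_iff.1 hx, Metric.mem_closedBall])
    exact (hF.isBounded.union Metric.isBounded_closedBall).subset hsub

lemma diffSet_eq (p₁ p₂ : Set (Set ℝ × ℝ)) :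
    diffSet p₁ p₂ = ⋃ s ∈ p₁, ⋃ r ∈ p₂,
      (fun q : ℝ × ℝ => q.1 - q.2) '' ((s.1 ∪ {s.2}) ×ˢ (r.1 ∪ {r.2})) := by
  ext z
  simp only [diffSet, Set.mem_setOf_eq, Set.mem_iUnion, Set.mem_image]
  constructor
  · rintro ⟨s, hs, r, hr, a, ha, b, hb, rfl⟩
    exact ⟨s, hs, r, hr, (a, b), ⟨ha, hb⟩, rfl⟩
  · rintro ⟨s, hs, r, hr, ⟨a, b⟩, ⟨ha, hb⟩, rfl⟩
    exact ⟨s, hs, r, hr, a, ha, b, hb, rfl⟩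

lemma cseq_transl (d : ℝ) {s : Set ℝ × ℝ} (h : IsCSeq s) :
    IsCSeq ((fun x => x + d) '' s.1, s.2 + d) := by
  have hinj : Function.Injective (fun x : ℝ => x + d) := fun a b hab => by
    simpa using hab
  refine ⟨h.1.image (hinj.injOn), fun ε hε => ?_, ?_⟩
  · have : {x ∈ (fun x => x + d) '' s.1 | ε ≤ |x - (s.2 + d)|}
        = (fun x => x + d) '' {x ∈ s.1 | ε ≤ |x - s.2|} := by
      ext x
      simp only [Set.mem_setOf_eq, Set.mem_image]
      constructor
      · rintro ⟨⟨y, hy, rfl⟩, hle⟩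
        exact ⟨y, ⟨hy, by simpa [abs_sub_comm] using (by rw [show y + d - (s.2 + d) = y - s.2 by ring] at hle; exact hle)⟩, rfl⟩
      · rintro ⟨y, ⟨hy, hle⟩, rfl⟩
        exact ⟨⟨y, hy, rfl⟩, by rw [show y + d - (s.2 + d) = y - s.2 by ring]; exact hle⟩
    rw [this]
    exact (h.2.1 ε hε).image _
  · rintro ⟨y, hy, hyd⟩
    have hyd' : y + d = s.2 + d := hyd
    have : y = s.2 := add_right_cancel hyd'
    exact h.2.2 (this ▸ hy)

/-- for conditions p₁, p₂ of P₁* the difference set D is meager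
(indeed countable); consequently there is a rational d with −d ∉ D, and for
such d the translate φ_d(p₁) is compatible with p₂. -/
theorem stmt12 (p₁ p₂ : Set (Set ℝ × ℝ)) (h₁ : IsCond p₁) (h₂ : IsCond p₂) :
    (diffSet p₁ p₂).Countable ∧ IsMeagre (diffSet p₁ p₂) ∧
    ∃ d : ℚ, -(d:ℝ) ∉ diffSet p₁ p₂ ∧ IsCond (transl d p₁ ∪ p₂) := by
  have hDeq := diffSet_eq p₁ p₂
  -- countability
  have hcnt : (diffSet p₁ p₂).Countable := by
    rw [hDeq]
    refine Set.Countable.biUnion h₁.1.countable fun s hs => ?_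
    refine Set.Countable.biUnion h₂.1.countable fun r hr => ?_
    refine Set.Countable.image ?_ _
    exact (((cseq_countable (h₁.2.1 s hs)).union (Set.countable_singleton _)).prod
      (((cseq_countable (h₂.2.1 r hr)).union (Set.countable_singleton _))))
  -- meagre
  have hmg : IsMeagre (diffSet p₁ p₂) := by
    rw [isMeagre_iff_countable_union_isNowhereDense]
    refine ⟨(fun x => ({x} : Set ℝ)) '' diffSet p₁ p₂, ?_, hcnt.image _, ?_⟩
    · rintro t ⟨x, -, rfl⟩
      show interior (closure _) = ∅
      rw [closure_singleton, interior_singleton]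
    · intro x hx
      exact ⟨{x}, ⟨x, hx, rfl⟩, rfl⟩
  refine ⟨hcnt, hmg, ?_⟩
  -- D is compact hence closed
  have hcomp : IsCompact (diffSet p₁ p₂) := by
    rw [hDeq]
    refine h₁.1.isCompact_biUnion fun s hs => ?_
    refine h₂.1.isCompact_biUnion fun r hr => ?_
    exact ((K_compact (h₁.2.1 s hs)).prod (K_compact (h₂.2.1 r hr))).image
      (continuous_fst.sub continuous_snd)
  have hne : ((diffSet p₁ p₂)ᶜ).Nonempty := by
    by_contra hc
    rw [Set.not_nonempty_iff_eq_empty, Set.compl_empty_iff] at hc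
    exact Cardinal.not_countable_real (hc ▸ hcnt)
  -- find d
  have hUopen : IsOpen (Neg.neg ⁻¹' (diffSet p₁ p₂)ᶜ : Set ℝ) :=
    (hcomp.isClosed.isOpen_compl).preimage continuous_neg
  have hUne : (Neg.neg ⁻¹' (diffSet p₁ p₂)ᶜ : Set ℝ).Nonempty := by
    obtain ⟨x, hx⟩ := hne
    exact ⟨-x, by simpa using hx⟩
  obtain ⟨d, hd⟩ := Rat.denseRange_cast.exists_mem_open hUopen hUne
  refine ⟨d, hd, ?_⟩
  -- compatibility
  have hdD : -(d:ℝ) ∉ diffSet p₁ p₂ := hd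
  refine ⟨((h₁.1.image _).union h₂.1), ?_, ?_⟩
  · rintro s (⟨t, ht, rfl⟩ | hs)
    · exact cseq_transl d (h₁.2.1 t ht)
    · exact h₂.2.1 s hs
  · rintro s (⟨s', hs', rfl⟩ | hs) t (⟨t', ht', rfl⟩ | ht) hne'
    · -- both translated
      intro hmem
      obtain ⟨y, hy, hyd⟩ := hmem
      have hyd' : y + d = s'.2 + d := hyd
      have hy2 : s'.2 = y := (add_right_cancel hyd').symm
      rcases eq_or_ne s' t' with rfl | hst
      · exact hne' rfl
      · exact h₁.2.2 s' hs' t' ht' hst (hy2 ▸ hy)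
    · -- s translated, t ∈ p₂
      intro hmem
      apply hdD
      refine ⟨s', hs', t, ht, s'.2, Or.inr rfl, s'.2 + d, Or.inl hmem, by ring⟩
    · -- s ∈ p₂, t translated
      rintro ⟨y, hy, hyd⟩
      apply hdD
      have hyd' : y + d = s.2 := hyd
      refine ⟨t', ht', s, hs, y, Or.inl hy, s.2, Or.inr rfl, by linarith⟩
    · exact h₂.2.2 s hs t ht hne'
end
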